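/- For the mobility M(ρ) = ρ and the scalar equation L(ρ) = D_ρ(ρ − ρ̂) − (ζ/2) ∑_j (D_{m_j} m̂_j/(D_{m_j} ρ + ζ))² = 0 on (0, +∞): if ρ̂ ≤ C₁ where C₁ = −(1/(2ζ D_ρ)) ∑_j (D_{m_j} m̂_j)², then L(ρ) > 0 for all ρ > 0, so L has no root in (0, ∞), and the bounded minimizer of the proximal subproblem is ρ* = 0; if ρ̂ > C₁, then L has a unique root in (0, +∞). -/
import Mathlib


open Classical in
noncomputable def phiAction {d : ℕ} (M : ℝ → ℝ) (ρ : ℝ) (m : EuclideanSpace ℝ (Fin d)) : EReal :=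
  if 0 < M ρ then ((‖m‖ ^ 2 / M ρ : ℝ) : EReal)
  else if M ρ = 0 ∧ m = 0 then 0 else ⊤

noncomputable def proxObj {d : ℕ} (M : ℝ → ℝ) (Dρ ζ : ℝ) (Dm : Fin d → ℝ)
    (ρhat : ℝ) (mhat : EuclideanSpace ℝ (Fin d))
    (p : ℝ × EuclideanSpace ℝ (Fin d)) : EReal :=
  ((1 / 2 * Dρ * (p.1 - ρhat) ^ 2
      + 1 / 2 * ∑ j, Dm j * (p.2 j - mhat j) ^ 2 : ℝ) : EReal)
    + ((ζ / 2 : ℝ) : EReal) * phiAction M p.1 p.2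

/-- For the mobility M(ρ) = ρ: if ρ̂ ≤ C₁ then L > 0 on (0,∞) (so L has no root there) and
the bounded minimizer of the proximal subproblem is ρ* = 0; if ρ̂ > C₁ then L has a unique
root in (0,∞). Here L(ρ) = D_ρ(ρ−ρ̂) − (ζ/2)∑_j (D_{m_j} m̂_j/(D_{m_j} ρ + ζ))² and
C₁ = −(1/(2ζD_ρ))∑_j (D_{m_j} m̂_j)². -/
theorem linear_mobility_root_dichotomy {d : ℕ}
    (Dρ ζ : ℝ) (Dm : Fin d → ℝ) (hDρ : 0 < Dρ) (hζ : 0 < ζ) (hDm : ∀ j, 0 < Dm j)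
    (ρhat : ℝ) (mhat : EuclideanSpace ℝ (Fin d))
    (L : ℝ → ℝ)
    (hL : ∀ ρ, L ρ = Dρ * (ρ - ρhat)
        - ζ / 2 * ∑ j, (Dm j * mhat j / (Dm j * ρ + ζ)) ^ 2)
    (C₁ : ℝ) (hC₁ : C₁ = -(1 / (2 * ζ * Dρ)) * ∑ j, (Dm j * mhat j) ^ 2) :
    (ρhat ≤ C₁ →
      (∀ ρ, 0 < ρ → 0 < L ρ) ∧
      (∀ q, proxObj (fun ρ => ρ) Dρ ζ Dm ρhat mhat ((0 : ℝ), (0 : EuclideanSpace ℝ (Fin d)))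
          ≤ proxObj (fun ρ => ρ) Dρ ζ Dm ρhat mhat q)) ∧
    (C₁ < ρhat → ∃! ρ, 0 < ρ ∧ L ρ = 0) := by
  set S : ℝ := ∑ j, (Dm j * mhat j) ^ 2 with hSdef
  have hSnonneg : 0 ≤ S := Finset.sum_nonneg fun j _ => sq_nonneg _
  have hS : S = -(2 * ζ * Dρ * C₁) := by
    field_simp at hC₁
    linarith
  -- Lemma A : lower bound for L on [0,∞)
  have hlow : ∀ ρ : ℝ, 0 ≤ ρ → Dρ * (ρ - ρhat) - S / (2 * ζ) ≤ L ρ := by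
    intro ρ hρ
    rw [hL]
    have hsum : ∑ j, (Dm j * mhat j / (Dm j * ρ + ζ)) ^ 2 ≤ S / ζ ^ 2 := by
      rw [hSdef, Finset.sum_div]
      refine Finset.sum_le_sum fun j _ => ?_
      rw [div_pow]
      refine div_le_div_of_nonneg_left (sq_nonneg _) (by positivity) ?_
      have h1 : 0 ≤ Dm j * ρ := mul_nonneg (hDm j).le hρ
      nlinarith
    have : ζ / 2 * ∑ j, (Dm j * mhat j / (Dm j * ρ + ζ)) ^ 2 ≤ ζ / 2 * (S / ζ ^ 2) := by
      exact mul_le_mul_of_nonneg_left hsum (by positivity)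
    have h2 : ζ / 2 * (S / ζ ^ 2) = S / (2 * ζ) := by
      field_simp
    linarith [this, h2.le]
  -- Lemma B : strict monotonicity on [0,∞)
  have hmono : ∀ a b : ℝ, 0 ≤ a → a < b → L a < L b := by
    intro a b ha hab
    rw [hL, hL]
    have hsum : ∑ j, (Dm j * mhat j / (Dm j * b + ζ)) ^ 2
        ≤ ∑ j, (Dm j * mhat j / (Dm j * a + ζ)) ^ 2 := by
      refine Finset.sum_le_sum fun j _ => ?_
      rw [div_pow, div_pow]
      have h1 : 0 ≤ Dm j * a := mul_nonneg (hDm j).le ha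
      have h2 : Dm j * a ≤ Dm j * b := mul_le_mul_of_nonneg_left hab.le (hDm j).le
      refine div_le_div_of_nonneg_left (sq_nonneg _) (by positivity) ?_
      nlinarith
    have := mul_le_mul_of_nonneg_left hsum (le_of_lt (by positivity : (0:ℝ) < ζ / 2))
    nlinarith
  -- continuity of L on [0,∞)
  have hcont : ContinuousOn L (Set.Ici (0:ℝ)) := by
    have hLfun : L = fun ρ => Dρ * (ρ - ρhat)
        - ζ / 2 * ∑ j, (Dm j * mhat j / (Dm j * ρ + ζ)) ^ 2 := funext hL
    rw [hLfun]
    refine ContinuousOn.sub (by fun_prop) (ContinuousOn.mul continuousOn_const ?_)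
    refine continuousOn_finset_sum _ fun j _ => ContinuousOn.pow ?_ 2
    refine ContinuousOn.div continuousOn_const (by fun_prop) fun x hx => ?_
    have : 0 ≤ Dm j * x := mul_nonneg (hDm j).le hx
    positivity
  constructor
  · intro hρhat
    constructor
    · intro ρ hρ
      have := hlow ρ hρ.le
      have hc : S / (2 * ζ) = -(Dρ * C₁) := by
        rw [hS]; field_simp
      nlinarith
    · intro q
      obtain ⟨ρ, m⟩ := q
      have hval0 : proxObj (fun ρ => ρ) Dρ ζ Dm ρhat mhat ((0:ℝ), (0 : EuclideanSpace ℝ (Fin d)))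
          = ((1 / 2 * Dρ * (0 - ρhat) ^ 2
              + 1 / 2 * ∑ j, Dm j * ((0:ℝ) - mhat j) ^ 2 : ℝ) : EReal) := by
        simp [proxObj, phiAction]
      by_cases hρ : 0 < ρ
      · have hφ : phiAction (fun ρ => ρ) ρ m = ((‖m‖ ^ 2 / ρ : ℝ) : EReal) := by
          simp [phiAction, hρ]
        rw [hval0]
        show _ ≤ ((1 / 2 * Dρ * (ρ - ρhat) ^ 2
              + 1 / 2 * ∑ j, Dm j * (m j - mhat j) ^ 2 : ℝ) : EReal)
            + ((ζ / 2 : ℝ) : EReal) * phiAction (fun ρ => ρ) ρ m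
        rw [hφ, ← EReal.coe_mul, ← EReal.coe_add, EReal.coe_le_coe_iff]
        have hnorm : ‖m‖ ^ 2 = ∑ j, (m j) ^ 2 := by
          rw [EuclideanSpace.norm_eq, Real.sq_sqrt (by positivity)]
          simp [sq_abs]
        rw [hnorm]
        -- per-coordinate inequality
        have hper : ∀ j, 1/2 * Dm j * (mhat j)^2 - ρ / (2*ζ) * (Dm j * mhat j)^2
            ≤ 1/2 * Dm j * (m j - mhat j)^2 + ζ/(2*ρ) * (m j)^2 := by
          intro j
          have hd := hDm j
          rw [← sub_nonneg]
          have key : (1/2 * Dm j * (m j - mhat j)^2 + ζ/(2*ρ) * (m j)^2)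
              - (1/2 * Dm j * (mhat j)^2 - ρ/(2*ζ) * (Dm j * mhat j)^2)
              = (ρ * ζ * Dm j * (m j)^2 + (ζ * m j - ρ * (Dm j * mhat j))^2)
                / (2*ρ*ζ) := by
            field_simp; ring
          rw [key]
          positivity
        have hsum := Finset.sum_le_sum fun j (_ : j ∈ Finset.univ) => hper j
        rw [Finset.sum_sub_distrib] at hsum
        have e1 : ∑ j, ρ / (2*ζ) * (Dm j * mhat j)^2 = ρ / (2*ζ) * S := by
          rw [hSdef, Finset.mul_sum]
        have e2 : ∑ j, (1/2 * Dm j * (m j - mhat j)^2 + ζ/(2*ρ) * (m j)^2)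
            = (∑ j, 1/2 * Dm j * (m j - mhat j)^2) + ζ/(2*ρ) * ∑ j, (m j)^2 := by
          rw [Finset.sum_add_distrib, Finset.mul_sum]
        rw [e1, e2] at hsum
        have e4 : (1:ℝ)/2 * ∑ j, Dm j * ((0:ℝ) - mhat j)^2 = ∑ j, 1/2 * Dm j * (mhat j)^2 := by
          rw [Finset.mul_sum]; exact Finset.sum_congr rfl fun j _ => by ring
        have e5 : (1:ℝ)/2 * ∑ j, Dm j * (m j - mhat j)^2
            = ∑ j, 1/2 * Dm j * (m j - mhat j)^2 := by
          rw [Finset.mul_sum]; exact Finset.sum_congr rfl fun j _ => by ring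
        have e6 : (ζ/2 : ℝ) * ((∑ j, (m j)^2) / ρ) = ζ/(2*ρ) * ∑ j, (m j)^2 := by
          field_simp
        rw [e4, e5, e6]
        -- now combine with hS and ρhat ≤ C₁
        have hkey : 0 ≤ Dρ * ρ * (ρ / 2 + (C₁ - ρhat)) := by
          have : 0 ≤ ρ / 2 + (C₁ - ρhat) := by linarith [hρ.le]
          positivity
        have hSv : ρ / (2*ζ) * S = -(ρ * Dρ * C₁) := by
          rw [hS]; field_simp
        nlinarith [hsum]
      · by_cases h0 : ρ = 0 ∧ m = 0
        · have : ((ρ, m) : ℝ × EuclideanSpace ℝ (Fin d))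
              = ((0:ℝ), (0 : EuclideanSpace ℝ (Fin d))) := by rw [h0.1, h0.2]
          rw [this]
        · have hφ : phiAction (fun ρ => ρ) ρ m = ⊤ := by
            simp only [phiAction]
            rw [if_neg hρ, if_neg h0]
          show _ ≤ _ + ((ζ / 2 : ℝ) : EReal) * phiAction (fun ρ => ρ) ρ m
          rw [hφ]
          have h1 : ((ζ / 2 : ℝ) : EReal) * ⊤ = ⊤ :=
            EReal.mul_top_of_pos (by exact_mod_cast (by positivity : (0:ℝ) < ζ/2))
          rw [h1]
          have h2 : ((1 / 2 * Dρ * (ρ - ρhat) ^ 2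
                + 1 / 2 * ∑ j, Dm j * (m j - mhat j) ^ 2 : ℝ) : EReal) + ⊤ = ⊤ := by
            rw [EReal.add_top_iff_ne_bot]; exact EReal.coe_ne_bot _
          rw [h2]
          exact le_top
  · intro hρhat
    -- L 0 < 0
    have hL0 : L 0 < 0 := by
      rw [hL]
      have : ∑ j, (Dm j * mhat j / (Dm j * 0 + ζ)) ^ 2 = S / ζ ^ 2 := by
        rw [hSdef, Finset.sum_div]
        refine Finset.sum_congr rfl fun j _ => by rw [mul_zero, zero_add, div_pow]
      rw [this]
      have h2 : ζ / 2 * (S / ζ ^ 2) = S / (2 * ζ) := by field_simp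
      rw [h2, hS]
      have : -(2 * ζ * Dρ * C₁) / (2 * ζ) = -(Dρ * C₁) := by field_simp
      rw [this]
      nlinarith
    -- find ε > 0 with L ε < 0
    have hev : ∀ᶠ x in nhdsWithin 0 (Set.Ici (0:ℝ)), L x < 0 :=
      Filter.Tendsto.eventually_lt_const hL0 (hcont 0 Set.self_mem_Ici)
    have hev' : ∀ᶠ x in nhdsWithin 0 (Set.Ioi (0:ℝ)), L x < 0 :=
      hev.filter_mono (nhdsWithin_mono 0 Set.Ioi_subset_Ici_self)
    obtain ⟨ε, hε1, hε2⟩ := (eventually_mem_nhdsWithin.and hev').exists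
    have hεpos : 0 < ε := Set.mem_Ioi.mp hε1
    set B : ℝ := max ε (ρhat + S / (2 * ζ * Dρ) + 1) with hBdef
    have hεB : ε ≤ B := le_max_left _ _
    have hB2 : ρhat + S / (2 * ζ * Dρ) + 1 ≤ B := le_max_right _ _
    have hLB : 0 < L B := by
      have h1 := hlow B (le_trans hεpos.le hεB)
      have h2 : Dρ * (S / (2 * ζ * Dρ)) = S / (2 * ζ) := by field_simp
      nlinarith
    have hsub : Set.Icc ε B ⊆ Set.Ici (0:ℝ) :=
      fun x hx => le_trans hεpos.le hx.1
    obtain ⟨ρ₀, hmem, hval⟩ :=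
      intermediate_value_Icc hεB (hcont.mono hsub) ⟨hε2.le, hLB.le⟩
    have hρ₀pos : 0 < ρ₀ := lt_of_lt_of_le hεpos hmem.1
    refine ⟨ρ₀, ⟨hρ₀pos, hval⟩, ?_⟩
    rintro y ⟨hy, hLy⟩
    by_contra hne
    rcases lt_or_gt_of_ne hne with h | h
    · have := hmono y ρ₀ hy.le h
      rw [hLy, hval] at this
      exact lt_irrefl 0 this
    · have := hmono ρ₀ y hρ₀pos.le h
      rw [hLy, hval] at this
      exact lt_irrefl 0 this
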